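/- arXiv:1408.0419 — 5 statements merged into one kernel-verified Lean document; each statement's English description precedes it below -/
import Mathlib

section
/- Let M be a matroid with bases B₁, B₂ and let d = |B₁ \ B₂|. Define Δ(B₁,B₂) to be the number of unordered pairs {D₁, D₂} of bases of M with D₁ ∪ D₂ = B₁ ∪ B₂ as multisets (equivalently, D₁ ∩ D₂ = B₁ ∩ B₂ and D₁ ∪ D₂ = B₁ ∪ B₂ as sets). Then Δ(B₁,B₂) ≥ 2^(d-1). -/
noncomputable def Matroid.deltaPairs {α : Type*} (M : Matroid α) (B₁ B₂ : Set α) : ℕ :=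
  {p : Sym2 (Set α) | ∃ D₁ D₂, p = s(D₁, D₂) ∧ M.IsBase D₁ ∧ M.IsBase D₂ ∧
    D₁ ∪ D₂ = B₁ ∪ B₂ ∧ D₁ ∩ D₂ = B₁ ∩ B₂}.ncard

/-- Contraction of `C` in `M`, defined via the dual of a restriction of the dual. -/
noncomputable def Matroid.con {α : Type*} (M : Matroid α) (C : Set α) : Matroid α :=
  (Matroid.restrict M.dual (M.E \ C)).dual

/-!
By the multiple symmetric exchange property (Greene, Woodall), every `A ⊆ B₁ \ B₂` has a partner
`J ⊆ B₂ \ B₁` such that `(B₁ \ A) ∪ J` and `(B₂ \ J) ∪ A` are both bases; such a pair has the same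
multiset union as `B₁, B₂`. The second base meets `B₁ \ B₂` in exactly `A`, so letting `A` range
over the `2 ^ (d - 1)` subsets of `B₁ \ B₂` containing a fixed element gives distinct unordered
pairs.

The exchange property is an instance of matroid intersection: `J` has to be independent both in
`M ／ (B₁ \ A)` and in `M✶ ／ (E \ (B₂ ∪ A))`, and submodularity of the rank function shows that
the min-max bound of the intersection theorem allows `|J| = |A|`. The intersection theorem itself
is proved by induction on the ground set, deleting or contracting one element at a time.
-/

open Set

namespace Matroid

variable {α : Type*} {M : Matroid α} {A B B₁ B₂ I X Y Z Z₁ : Set α} {e : α}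

/-- Takes the junk value `0` on sets of infinite rank. -/
noncomputable def rk (M : Matroid α) (X : Set α) : ℕ := (M.eRk X).toNat

@[simp]
lemma rk_empty (M : Matroid α) : M.rk ∅ = 0 := by
  simp [rk]

lemma Spanning.isBase_of_ncard_le (hX : M.Spanning X) (hXfin : X.Finite) (hB : M.IsBase B)
    (h : X.ncard ≤ B.ncard) : M.IsBase X := by
  obtain ⟨B', hB', hB'X⟩ := hX.exists_isBase_subset
  rwa [← eq_of_subset_of_ncard_le hB'X (by rwa [hB'.ncard_eq_ncard_of_isBase hB]) hXfin]

section RankFinite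

variable [M.RankFinite]

lemma cast_rk_eq (X : Set α) : (M.rk X : ℕ∞) = M.eRk X :=
  ENat.natCast_toNat (M.isRkFinite_set X).eRk_lt_top.ne

lemma rk_inter_add_rk_union_le (X Y : Set α) :
    M.rk (X ∩ Y) + M.rk (X ∪ Y) ≤ M.rk X + M.rk Y := by
  have h := M.eRk_inter_add_eRk_union_le X Y
  rw [← cast_rk_eq, ← cast_rk_eq, ← cast_rk_eq, ← cast_rk_eq] at h
  exact_mod_cast h

lemma rk_mono (hXY : X ⊆ Y) : M.rk X ≤ M.rk Y := by
  have h := M.eRk_mono hXY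
  rw [← cast_rk_eq, ← cast_rk_eq] at h
  exact_mod_cast h

lemma Indep.rk_eq_ncard (hI : M.Indep I) : M.rk I = I.ncard := by
  have h := hI.eRk_eq_encard
  rw [← cast_rk_eq, ← hI.finite.cast_ncard_eq] at h
  exact_mod_cast h

lemma IsBasis'.rk_eq_ncard (hI : M.IsBasis' I X) : M.rk X = I.ncard := by
  rw [rk, ← hI.eRk_eq_eRk]
  exact hI.indep.rk_eq_ncard

lemma indep_of_ncard_le_rk (hX : X.Finite) (h : X.ncard ≤ M.rk X) : M.Indep X := by
  refine (M.isRkFinite_set X).indep_of_encard_le_eRk ?_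
  rw [← cast_rk_eq, ← hX.cast_ncard_eq]
  exact_mod_cast h

lemma indep_singleton_of_rk_lt_rk_insert (h : M.rk X < M.rk (insert e X)) : M.Indep {e} := by
  have hsubmod := M.rk_inter_add_rk_union_le X {e}
  rw [union_singleton] at hsubmod
  exact indep_of_ncard_le_rk (finite_singleton e) (by rw [ncard_singleton]; omega)

lemma Indep.rk_contract_add_ncard (hI : M.Indep I) (X : Set α) :
    (M ／ I).rk X + I.ncard = M.rk (X ∪ I) := by
  obtain ⟨J, hJ, hIJ⟩ := hI.subset_isBasis'_of_subset (subset_union_right (s := X))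
  have hground : (M ／ I).rk X = (M ／ I).rk (X ∪ I) := by
    rw [rk, rk, ← eRk_inter_ground, ← (M ／ I).eRk_inter_ground (X ∪ I), contract_ground]
    congr 2
    tauto_set
  rw [hground, (hJ.contract_isBasis'_sdiff_of_subset hIJ).rk_eq_ncard, hJ.rk_eq_ncard,
    ncard_sdiff_add_ncard_of_subset hIJ hJ.indep.finite]

lemma Indep.isBase_of_ncard_le (hI : M.Indep I) (hB : M.IsBase B) (h : B.ncard ≤ I.ncard) :
    M.IsBase I := by
  obtain ⟨B', hB', hIB'⟩ := hI.exists_isBase_superset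
  rwa [eq_of_subset_of_ncard_le hIB' (by rwa [hB'.ncard_eq_ncard_of_isBase hB]) hB'.finite]

end RankFinite

lemma rk_dual_add_rk_ground [M.Finite] (hX : X ⊆ M.E) :
    M✶.rk X + M.rk M.E = M.rk (M.E \ X) + X.ncard := by
  have h := M.eRk_dual_add_eRank X hX
  rw [eRank_def, ← cast_rk_eq, ← cast_rk_eq, ← cast_rk_eq,
    ← (M.ground_finite.subset hX).cast_ncard_eq] at h
  exact_mod_cast h

section Intersection

variable {N : Matroid α} [M.RankFinite] [N.RankFinite] {k : ℕ}

/-- `Z₁` witnesses that `e` cannot simply be deleted. If the bound after contracting `e` failed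
at `Z`, uncrossing `Z` and `Z₁` by submodularity would contradict the bound at
`insert e (Z₁ ∪ Z)` and at `Z₁ ∩ Z`. -/
lemma le_rk_contract_add_rk_contract_add_one (heY : e ∉ Y) (heM : M.Indep {e})
    (heN : N.Indep {e}) (h : ∀ Z ⊆ insert e Y, k ≤ M.rk Z + N.rk (insert e Y \ Z))
    (hZ₁Y : Z₁ ⊆ Y) (hZ₁ : M.rk Z₁ + N.rk (Y \ Z₁) < k) (hZY : Z ⊆ Y) :
    k ≤ (M ／ {e}).rk Z + (N ／ {e}).rk (Y \ Z) + 1 := by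
  by_contra! hZ
  have hcontractM := heM.rk_contract_add_ncard Z
  have hcontractN := heN.rk_contract_add_ncard (Y \ Z)
  have hsubmodM := M.rk_inter_add_rk_union_le Z₁ (Z ∪ {e})
  have hsubmodN := N.rk_inter_add_rk_union_le (Y \ Z₁) ((Y \ Z) ∪ {e})
  have hunion := h (insert e (Z₁ ∪ Z)) (insert_subset_insert (union_subset hZ₁Y hZY))
  have hinter := h (Z₁ ∩ Z) ((inter_subset_left.trans hZ₁Y).trans (subset_insert e Y))
  have heZ₁ : e ∉ Z₁ := fun h ↦ heY (hZ₁Y h)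
  rw [show Z₁ ∩ (Z ∪ {e}) = Z₁ ∩ Z by grind,
    show Z₁ ∪ (Z ∪ {e}) = insert e (Z₁ ∪ Z) by grind] at hsubmodM
  rw [show (Y \ Z₁) ∩ ((Y \ Z) ∪ {e}) = Y \ (Z₁ ∪ Z) by grind,
    show (Y \ Z₁) ∪ ((Y \ Z) ∪ {e}) = insert e (Y \ (Z₁ ∩ Z)) by grind] at hsubmodN
  rw [show insert e Y \ insert e (Z₁ ∪ Z) = Y \ (Z₁ ∪ Z) by grind] at hunion
  rw [show insert e Y \ (Z₁ ∩ Z) = insert e (Y \ (Z₁ ∩ Z)) by grind] at hinter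
  rw [ncard_singleton] at hcontractM hcontractN
  omega

theorem exists_common_indep_of_le_rk_add_rk (hY : Y.Finite)
    (h : ∀ Z ⊆ Y, k ≤ M.rk Z + N.rk (Y \ Z)) : ∃ I ⊆ Y, M.Indep I ∧ N.Indep I ∧ k ≤ I.ncard := by
  induction Y, hY using Set.Finite.induction_on generalizing M N k with
  | empty => exact ⟨∅, Subset.rfl, M.empty_indep, N.empty_indep, by simpa using h ∅⟩
  | @insert e Y heY hY ih =>
  by_cases hdelete : ∀ Z ⊆ Y, k ≤ M.rk Z + N.rk (Y \ Z)
  · obtain ⟨I, hIY, hI⟩ := ih hdelete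
    exact ⟨I, hIY.trans (subset_insert e Y), hI⟩
  push Not at hdelete
  obtain ⟨Z₁, hZ₁Y, hZ₁⟩ := hdelete
  have hM := h (insert e Z₁) (insert_subset_insert hZ₁Y)
  have hN := h Z₁ (hZ₁Y.trans (subset_insert e Y))
  rw [show insert e Y \ insert e Z₁ = Y \ Z₁ by grind] at hM
  rw [show insert e Y \ Z₁ = insert e (Y \ Z₁) by grind] at hN
  have heM : M.Indep {e} := indep_singleton_of_rk_lt_rk_insert (X := Z₁) (by omega)
  have heN : N.Indep {e} := indep_singleton_of_rk_lt_rk_insert (X := Y \ Z₁) (by omega)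
  obtain ⟨I, hIY, hIM, hIN, hkI⟩ := ih (M := M ／ {e}) (N := N ／ {e}) (k := k - 1) fun Z hZY ↦ by
    have := le_rk_contract_add_rk_contract_add_one heY heM heN h hZ₁Y hZ₁ hZY
    omega
  refine ⟨insert e I, insert_subset_insert hIY, ?_, ?_, ?_⟩
  · rw [← union_singleton]
    exact (heM.contract_indep_iff.1 hIM).2
  · rw [← union_singleton]
    exact (heN.contract_indep_iff.1 hIN).2
  · rw [ncard_insert_of_notMem (fun h ↦ heY (hIY h)) hIM.finite]
    omega

end Intersection

section Finite

variable [M.Finite]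

lemma IsBase.ncard_le_rk_contract_add_rk_dual_contract (h₁ : M.IsBase B₁) (h₂ : M.IsBase B₂)
    (hA : A ⊆ B₁ \ B₂) (hZ : Z ⊆ B₂ \ B₁) :
    A.ncard ≤ (M ／ (B₁ \ A)).rk Z + (M✶ ／ (M.E \ (B₂ ∪ A))).rk ((B₂ \ B₁) \ Z) := by
  have hB₁E := h₁.subset_ground
  have hB₂E := h₂.subset_ground
  have hfin := M.ground_finite
  have hP : M.Indep (B₁ \ A) := h₁.indep.subset sdiff_subset
  have hQ : M✶.Indep (M.E \ (B₂ ∪ A)) :=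
    h₂.compl_isBase_dual.indep.subset (sdiff_subset_sdiff_right subset_union_left)
  have hcontract := hP.rk_contract_add_ncard Z
  have hcontract_dual := hQ.rk_contract_add_ncard ((B₂ \ B₁) \ Z)
  have hdual := M.rk_dual_add_rk_ground (X := (B₂ \ B₁) \ Z ∪ M.E \ (B₂ ∪ A)) (by grind)
  rw [show M.E \ ((B₂ \ B₁) \ Z ∪ M.E \ (B₂ ∪ A)) = (B₁ ∩ B₂ ∪ Z) ∪ A by grind,
    ncard_union_eq (by grind) (hfin.subset (by grind)) (hfin.subset (by grind))] at hdual
  have hsubmod := M.rk_inter_add_rk_union_le (Z ∪ (B₁ \ A)) ((B₁ ∩ B₂ ∪ Z) ∪ A)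
  rw [show (Z ∪ (B₁ \ A)) ∩ ((B₁ ∩ B₂ ∪ Z) ∪ A) = B₁ ∩ B₂ ∪ Z by grind,
    show Z ∪ (B₁ \ A) ∪ ((B₁ ∩ B₂ ∪ Z) ∪ A) = B₁ ∪ Z by grind] at hsubmod
  have hr := h₁.isBasis_ground.isBasis'.rk_eq_ncard
  have hspan : M.rk M.E ≤ M.rk (B₁ ∪ Z) := by
    rw [hr, ← h₁.indep.rk_eq_ncard]
    exact rk_mono subset_union_left
  have hindep : M.rk (B₁ ∩ B₂ ∪ Z) = (B₁ ∩ B₂).ncard + Z.ncard := by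
    rw [(h₂.indep.subset (by grind)).rk_eq_ncard,
      ncard_union_eq (by grind) (hfin.subset (by grind)) (hfin.subset (by grind))]
  have hB₁ := ncard_sdiff_add_ncard_of_subset (hA.trans sdiff_subset) h₁.finite
  have hB₂ := ncard_inter_add_ncard_sdiff_eq_ncard B₂ B₁ h₂.finite
  have hY := ncard_sdiff_add_ncard_of_subset hZ h₂.finite.sdiff
  have hB := h₁.ncard_eq_ncard_of_isBase h₂
  rw [inter_comm B₂] at hB₂
  omega

theorem IsBase.exists_multiple_symmetric_exchange (h₁ : M.IsBase B₁) (h₂ : M.IsBase B₂)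
    (hA : A ⊆ B₁ \ B₂) :
    ∃ J ⊆ B₂ \ B₁, M.IsBase ((B₁ \ A) ∪ J) ∧ M.IsBase ((B₂ \ J) ∪ A) := by
  have hP : M.Indep (B₁ \ A) := h₁.indep.subset sdiff_subset
  have hQ : M✶.Indep (M.E \ (B₂ ∪ A)) :=
    h₂.compl_isBase_dual.indep.subset (sdiff_subset_sdiff_right subset_union_left)
  obtain ⟨J, hJY, hJP, hJQ, hAJ⟩ := exists_common_indep_of_le_rk_add_rk h₂.finite.sdiff
    fun Z hZ ↦ h₁.ncard_le_rk_contract_add_rk_dual_contract h₂ hA hZ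
  have hD₁ : M.IsBase ((B₁ \ A) ∪ J) := by
    refine (union_comm J _ ▸ (hP.contract_indep_iff.1 hJP).2).isBase_of_ncard_le h₁ ?_
    rw [ncard_union_eq (by grind) hP.finite hJP.finite]
    have := ncard_sdiff_add_ncard_of_subset (hA.trans sdiff_subset) h₁.finite
    omega
  have hD₂ : M.Spanning ((B₂ \ J) ∪ A) := by
    have hcoindep : M.Coindep (J ∪ M.E \ (B₂ ∪ A)) := (hQ.contract_indep_iff.1 hJQ).2
    have hB₂E := h₂.subset_ground
    have hAE := hA.trans (sdiff_subset.trans h₁.subset_ground)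
    rw [← show M.E \ (J ∪ M.E \ (B₂ ∪ A)) = (B₂ \ J) ∪ A by grind]
    exact hcoindep.compl_spanning
  refine ⟨J, hJY, hD₁, hD₂.isBase_of_ncard_le (M.ground_finite.subset hD₂.subset_ground) h₂ ?_⟩
  have := ncard_sdiff_add_ncard_of_subset (hJY.trans sdiff_subset) h₂.finite
  have := ncard_union_le (B₂ \ J) A
  omega

lemma ncard_le_deltaPairs {ι : Type*} {s : Set ι} {D₁ D₂ : ι → Set α}
    (hD₁ : ∀ i ∈ s, M.IsBase (D₁ i)) (hD₂ : ∀ i ∈ s, M.IsBase (D₂ i))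
    (hunion : ∀ i ∈ s, D₁ i ∪ D₂ i = B₁ ∪ B₂) (hinter : ∀ i ∈ s, D₁ i ∩ D₂ i = B₁ ∩ B₂)
    (hinj : InjOn (fun i ↦ s(D₁ i, D₂ i)) s) : s.ncard ≤ M.deltaPairs B₁ B₂ := by
  have hbases : {B | M.IsBase B}.Finite :=
    M.ground_finite.finite_subsets.subset fun B hB ↦ hB.subset_ground
  refine ncard_le_ncard_of_injOn _ (fun i hi ↦ ⟨_, _, rfl, hD₁ i hi, hD₂ i hi, hunion i hi,
    hinter i hi⟩) hinj (((hbases.prod hbases).image fun p ↦ s(p.1, p.2)).subset ?_)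
  rintro _ ⟨D₁, D₂, rfl, hD₁, hD₂, -⟩
  exact ⟨(D₁, D₂), ⟨hD₁, hD₂⟩, rfl⟩

end Finite

end Matroid

/-- Lower bound `2^(d-1) ≤ Δ(B₁,B₂)` where `d = |B₁ \ B₂|`. -/
theorem delta_lower_bound {α : Type*} (M : Matroid α) (hfin : M.E.Finite)
    (B₁ B₂ : Set α) (h₁ : M.IsBase B₁) (h₂ : M.IsBase B₂)
    (d : ℕ) (hd : d = (B₁ \ B₂).ncard) (hd1 : 1 ≤ d) :
    2 ^ (d - 1) ≤ M.deltaPairs B₁ B₂ := by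
  have : M.Finite := ⟨hfin⟩
  obtain ⟨e, he⟩ : (B₁ \ B₂).Nonempty := nonempty_of_ncard_ne_zero (by omega)
  choose! J hJ hJ₁ hJ₂ using fun A (hA : A ⊆ B₁ \ B₂) ↦
    h₁.exists_multiple_symmetric_exchange h₂ hA
  have hsub (A) (hA : A ∈ 𝒫 ((B₁ \ B₂) \ {e})) : insert e A ⊆ B₁ \ B₂ :=
    insert_subset he (hA.trans sdiff_subset)
  calc 2 ^ (d - 1) = (𝒫 ((B₁ \ B₂) \ {e})).ncard := by
        rw [ncard_powerset _ h₁.finite.sdiff.sdiff, ncard_sdiff_singleton_of_mem he, hd]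
    _ ≤ M.deltaPairs B₁ B₂ := by
      refine M.ncard_le_deltaPairs (fun A hA ↦ hJ₁ _ (hsub A hA)) (fun A hA ↦ hJ₂ _ (hsub A hA))
        (fun A hA ↦ by grind [hJ _ (hsub A hA)]) (fun A hA ↦ by grind [hJ _ (hsub A hA)]) ?_
      intro A hA A' hA' h
      have := hJ _ (hsub A hA)
      have := hJ _ (hsub A' hA')
      rw [mem_powerset_iff] at hA hA'
      rcases Sym2.eq_iff.1 h with ⟨-, h⟩ | ⟨-, h⟩
      · ext x
        have := Set.ext_iff.1 h x
        grind
      · have := Set.ext_iff.1 h e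
        grind
end

section
/- Let M be a matroid with bases B₁, B₂ and let d = |B₁ \ B₂| with d ≥ 1. Define Δ(B₁,B₂) to be the number of unordered pairs {D₁, D₂} of bases of M with D₁ ∪ D₂ = B₁ ∪ B₂ and D₁ ∩ D₂ = B₁ ∩ B₂. Then Δ(B₁,B₂) ≤ C(2d-1, d), the binomial coefficient (2d-1 choose d). -/
/-!
Every pair `{D₁, D₂}` counted by `Δ(B₁, B₂)` satisfies `D₁ ∩ D₂ = B₁ ∩ B₂` and
`D₁ ∆ D₂ = B₁ ∆ B₂`, so it is determined by the half `D₁ \ D₂` of the symmetric difference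
`X = B₁ ∆ B₂`, and the half complementary to it gives the same pair. Since `|D₁ \ D₂| = |D₂ \ D₁|`
for bases, `|X| = 2d` and each half has `d` elements. Fixing `e ∈ B₁ \ B₂` and taking the half that
contains `e`, a pair is determined by a `(d - 1)`-subset of `X \ {e}`, of which there are
`C(2d - 1, d - 1) = C(2d - 1, d)`.
-/

open Set
open scoped symmDiff

theorem Set.inter_union_symmDiff_sdiff_sdiff {α : Type*} (s t : Set α) :
    s ∩ t ∪ (s ∆ t \ (s \ t)) = t := by
  ext x
  simp only [mem_union, mem_inter_iff, mem_sdiff, mem_symmDiff]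
  tauto

namespace Matroid

variable {α : Type*} {M : Matroid α} {B₁ B₂ : Set α}

theorem IsBase.ncard_symmDiff (hB₁ : M.IsBase B₁) (hB₂ : M.IsBase B₂) :
    (B₁ ∆ B₂).ncard = 2 * (B₁ \ B₂).ncard := by
  have hdisj : Disjoint (B₁ \ B₂) (B₂ \ B₁) := disjoint_sdiff_sdiff
  rw [ncard_def, Set.symmDiff_def, encard_union_eq hdisj,
    ← hB₁.encard_sdiff_comm hB₂, ← two_mul, ENat.toNat_mul, ← ncard_def]
  rfl

def deltaPairSet (M : Matroid α) (B₁ B₂ : Set α) : Set (Sym2 (Set α)) :=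
  {p | ∃ D₁ D₂, p = s(D₁, D₂) ∧ M.IsBase D₁ ∧ M.IsBase D₂ ∧
    D₁ ∪ D₂ = B₁ ∪ B₂ ∧ D₁ ∩ D₂ = B₁ ∩ B₂}

theorem deltaPairs_eq_ncard_deltaPairSet :
    M.deltaPairs B₁ B₂ = (M.deltaPairSet B₁ B₂).ncard := rfl

theorem deltaPairSet_subset_image (hB₁ : M.IsBase B₁) (hB₂ : M.IsBase B₂) {e : α}
    (he : e ∈ B₁ \ B₂) :
    M.deltaPairSet B₁ B₂ ⊆
      (fun T ↦ s(B₁ ∩ B₂ ∪ insert e T, B₁ ∩ B₂ ∪ (B₁ ∆ B₂ \ insert e T))) ''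
        {T ⊆ B₁ ∆ B₂ \ {e} | T.ncard = (B₁ \ B₂).ncard - 1} := by
  rintro _ ⟨D₁, D₂, rfl, hD₁, hD₂, hunion, hinter⟩
  wlog heD₁ : e ∈ D₁ generalizing D₁ D₂
  · have heD₂ : e ∈ D₂ := (hunion ▸ Or.inl he.1 : e ∈ D₁ ∪ D₂).resolve_left heD₁
    rw [Sym2.eq_swap]
    exact this D₂ D₁ hD₂ hD₁ (by rwa [union_comm]) (by rwa [inter_comm]) heD₂
  have heD : e ∈ D₁ \ D₂ := ⟨heD₁, fun heD₂ ↦ he.2 (hinter ▸ ⟨heD₁, heD₂⟩ : e ∈ B₁ ∩ B₂).2⟩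
  have hsymm : D₁ ∆ D₂ = B₁ ∆ B₂ := by
    rw [symmDiff_eq_sup_sdiff_inf, symmDiff_eq_sup_sdiff_inf]
    exact congrArg₂ (· \ ·) hunion hinter
  have hcard : (D₁ \ D₂).ncard = (B₁ \ B₂).ncard := by
    have := hD₁.ncard_symmDiff hD₂
    rw [hsymm, hB₁.ncard_symmDiff hB₂] at this
    omega
  refine ⟨(D₁ \ D₂) \ {e}, ⟨?_, ?_⟩, ?_⟩
  · exact sdiff_subset_sdiff_left (hsymm ▸ subset_union_left)
  · rw [ncard_sdiff_singleton_of_mem heD, hcard]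
  · dsimp only
    rw [insert_sdiff_singleton, insert_eq_of_mem heD, ← hinter, ← hsymm, inter_union_sdiff,
      inter_union_symmDiff_sdiff_sdiff]

end Matroid

theorem delta_upper_bound_general {α : Type*} (M : Matroid α)
    (B₁ B₂ : Set α) (h₁ : M.IsBase B₁) (h₂ : M.IsBase B₂)
    (d : ℕ) (hd : d = (B₁ \ B₂).ncard) (hd1 : 1 ≤ d) :
    M.deltaPairs B₁ B₂ ≤ (2 * d - 1).choose d := by
  obtain ⟨e, he⟩ : (B₁ \ B₂).Nonempty := nonempty_of_ncard_ne_zero (by omega)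
  have hX : (B₁ ∆ B₂).ncard = 2 * d := hd ▸ h₁.ncard_symmDiff h₂
  have hXfin : (B₁ ∆ B₂).Finite := finite_of_ncard_pos (by omega)
  have hXe : (B₁ ∆ B₂ \ {e}).ncard = 2 * d - 1 := by
    rw [ncard_sdiff_singleton_of_mem (mem_symmDiff.2 (Or.inl he)), hX]
  have hsubsets : {T ⊆ B₁ ∆ B₂ \ {e} | T.ncard = d - 1}.Finite :=
    (hXfin.sdiff.finite_subsets).subset fun _ hT ↦ hT.1
  calc M.deltaPairs B₁ B₂
      ≤ {T ⊆ B₁ ∆ B₂ \ {e} | T.ncard = d - 1}.ncard := by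
        have hpairs := Matroid.deltaPairSet_subset_image h₁ h₂ he
        rw [← hd] at hpairs
        rw [Matroid.deltaPairs_eq_ncard_deltaPairSet]
        exact (ncard_le_ncard hpairs (hsubsets.image _)).trans (ncard_image_le hsubsets)
    _ = (2 * d - 1).choose (d - 1) := by rw [ncard_powerset_ncard hXfin.sdiff, hXe]
    _ = (2 * d - 1).choose d := Nat.choose_symm_of_eq_add (by omega)

/-- Upper bound `Δ(B₁,B₂) ≤ C(2d-1, d)` where `d = |B₁ \ B₂|`. -/
theorem delta_upper_bound {α : Type*} (M : Matroid α) (hfin : M.E.Finite)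
    (B₁ B₂ : Set α) (h₁ : M.IsBase B₁) (h₂ : M.IsBase B₂)
    (d : ℕ) (hd : d = (B₁ \ B₂).ncard) (hd1 : 1 ≤ d) :
    M.deltaPairs B₁ B₂ ≤ (2 * d - 1).choose d :=
  delta_upper_bound_general M B₁ B₂ h₁ h₂ d hd hd1
end

section
/- If a matroid M has a minor isomorphic to the uniform matroid U_{d,2d} for some d ≥ 2, then there exist bases B₁, B₂ of M with Δ(B₁,B₂) = C(2d-1, d), where Δ(B₁,B₂) is the number of unordered pairs {D₁,D₂} of bases of M with D₁ ∪ D₂ = B₁ ∪ B₂ and D₁ ∩ D₂ = B₁ ∩ B₂. -/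
/-!
The bases of a minor `N` of `M` lift to bases of `M`: writing `N = M ＼ D ／ C`, with `I` a basis
of `C` in `M ＼ D` and `J` a base of `M ／ (M.E \ D)`, every base `X` of `N` gives a base
`X ∪ I ∪ J` of `M`. For `N ≅ U_{d,2d}` on `T = N.E` and `K = I ∪ J`, all `X ∪ K` with `X` a
`d`-subset of `T` are bases of `M`, and by base exchange these are the only bases `X ∪ K` with
`X ⊆ T`. Hence for a `d`-subset `B` of `T`, the pairs counted by `Δ(B ∪ K, (T \ B) ∪ K)` are the
pairs `{X ∪ K, (T \ X) ∪ K}` with `|X| = d`; choosing in each pair the member `X` avoiding a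
fixed `e ∈ T` counts them as `C(2d-1, d)`.
-/

namespace Set

variable {α : Type*} {T K X Y : Set α}

lemma union_union_sdiff_union (hX : X ⊆ T) : (X ∪ K) ∪ ((T \ X) ∪ K) = T ∪ K := by
  tauto_set

lemma union_inter_sdiff_union (hTK : Disjoint T K) (hX : X ⊆ T) :
    (X ∪ K) ∩ ((T \ X) ∪ K) = K := by
  tauto_set

lemma eq_sdiff_sdiff_union_of_union_eq_of_inter_eq (hTK : Disjoint T K) (hu : X ∪ Y = T ∪ K)
    (hi : X ∩ Y = K) : Y = (T \ (X \ K)) ∪ K := by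
  tauto_set

end Set

open Set

namespace Matroid

variable {α : Type*} {M N : Matroid α} {B I K X Y T : Set α} {d : ℕ} {e : α}

lemma coindep_of_subset_loops (hX : X ⊆ M.loops) : M.Coindep X := by
  obtain ⟨B, hB⟩ := M.exists_isBase
  refine coindep_iff_subset_compl_isBase.2 ⟨B, hB, subset_sdiff.2 ⟨?_, ?_⟩⟩
  · exact hX.trans M.loops_subset_ground
  · exact (hB.indep.disjoint_loops.mono_right hX).symm

lemma IsBasis.contract_isBase_iff (hI : M.IsBasis I X) :
    (M ／ X).IsBase B ↔ M.IsBase (B ∪ I) ∧ Disjoint B X := by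
  rw [hI.contract_eq_contract_delete,
    (coindep_of_subset_loops hI.sdiff_subset_loops_contract).delete_isBase_iff,
    hI.indep.contract_isBase_iff, and_assoc, ← disjoint_union_right, union_sdiff_cancel hI.subset]

lemma IsMinor.exists_forall_isBase_union (h : N ≤m M) :
    ∃ K, Disjoint N.E K ∧ ∀ X, N.IsBase X → M.IsBase (X ∪ K) := by
  obtain ⟨C, D, hCE, -, hCD, rfl⟩ := h.exists_eq_contract_delete_disjoint
  rw [contract_delete_comm _ hCD]
  obtain ⟨I, hI⟩ := (M ＼ D).exists_isBasis C (subset_sdiff.2 ⟨hCE, hCD⟩)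
  obtain ⟨J, hJ⟩ := (M ／ (M.E \ D)).exists_isBase
  have hIC : I ⊆ C := hI.subset
  have hJE : J ⊆ M.E \ (M.E \ D) := hJ.subset_ground
  refine ⟨I ∪ J, ?_, fun X hX ↦ ?_⟩
  · simp only [contract_ground, delete_ground]
    tauto_set
  have hXI : M.IsBasis (X ∪ I) (M.E \ D) := delete_isBase_iff.1 (hI.contract_isBase_iff.1 hX).1
  rw [← union_assoc, union_comm]
  exact (hXI.contract_isBase_iff.1 hJ).1

lemma encard_eq_encard_of_isBase_union (hX : M.IsBase (X ∪ K)) (hY : M.IsBase (Y ∪ K))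
    (hXK : Disjoint X K) (hYK : Disjoint Y K) : X.encard = Y.encard := by
  have hXY : (X ∪ K) \ (Y ∪ K) = X \ Y := by tauto_set
  have hYX : (Y ∪ K) \ (X ∪ K) = Y \ X := by tauto_set
  have h := hX.encard_sdiff_comm hY
  rw [hXY, hYX] at h
  rw [← encard_sdiff_add_encard_inter X Y, ← encard_sdiff_add_encard_inter Y X, h, inter_comm]

def complementPair (T K X : Set α) : Sym2 (Set α) := s(X ∪ K, (T \ X) ∪ K)

lemma complementPair_sdiff (hX : X ⊆ T) : complementPair T K (T \ X) = complementPair T K X := by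
  rw [complementPair, complementPair, sdiff_sdiff_cancel_left hX, Sym2.eq_swap]

lemma injOn_complementPair (hTK : Disjoint T K) (he : e ∈ T) :
    InjOn (complementPair T K) {X | X ⊆ T \ {e}} := by
  intro X (hX : X ⊆ T \ {e}) Y (hY : Y ⊆ T \ {e}) hXY
  rcases Sym2.eq_iff.1 hXY with ⟨h, -⟩ | ⟨h, -⟩
  · tauto_set
  · have heX : e ∈ X ∪ K := h ▸ Or.inl ⟨he, fun heY ↦ (hY heY).2 rfl⟩
    exact absurd (heX.resolve_right (hTK.notMem_of_mem_left he)) fun heX ↦ (hX heX).2 rfl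

lemma deltaPairs_union_sdiff_union (hTK : Disjoint T K) (hB : B ⊆ T) :
    M.deltaPairs (B ∪ K) ((T \ B) ∪ K) = (complementPair T K ''
      {X | X ⊆ T ∧ M.IsBase (X ∪ K) ∧ M.IsBase ((T \ X) ∪ K)}).ncard := by
  rw [deltaPairs, union_union_sdiff_union hB, union_inter_sdiff_union hTK hB]
  congr 1
  ext p
  constructor
  · rintro ⟨D₁, D₂, rfl, hD₁, hD₂, hu, hi⟩
    have hD₁K : D₁ = (D₁ \ K) ∪ K := (sdiff_union_of_subset (hi ▸ inter_subset_left)).symm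
    have hD₂K := eq_sdiff_sdiff_union_of_union_eq_of_inter_eq hTK hu hi
    have hD₁T : D₁ \ K ⊆ T := by
      rw [sdiff_subset_iff, union_comm, ← hu]
      exact subset_union_left
    refine ⟨D₁ \ K, ⟨hD₁T, hD₁K ▸ hD₁, hD₂K ▸ hD₂⟩, ?_⟩
    rw [complementPair, ← hD₁K, ← hD₂K]
  · rintro ⟨X, ⟨hXT, hX, hX'⟩, rfl⟩
    exact ⟨_, _, rfl, hX, hX', union_union_sdiff_union hXT, union_inter_sdiff_union hTK hXT⟩

lemma ncard_image_complementPair (hT : T.ncard = 2 * d) (hd : 0 < d) (hTK : Disjoint T K) :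
    (complementPair T K '' {X | X ⊆ T ∧ X.ncard = d}).ncard = (2 * d - 1).choose d := by
  have hTfin : T.Finite := finite_of_ncard_pos (by omega)
  obtain ⟨e, he⟩ := nonempty_of_ncard_ne_zero (by omega : T.ncard ≠ 0)
  have himage : complementPair T K '' {X | X ⊆ T ∧ X.ncard = d} =
      complementPair T K '' {X | X ⊆ T \ {e} ∧ X.ncard = d} := by
    refine subset_antisymm ?_ (image_mono fun X ⟨hX, hXd⟩ ↦ ⟨hX.trans sdiff_subset, hXd⟩)
    rintro _ ⟨X, ⟨hXT, hXd⟩, rfl⟩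
    by_cases heX : e ∈ X
    · refine ⟨T \ X, ⟨sdiff_subset_sdiff_right (singleton_subset_iff.2 heX), ?_⟩,
        complementPair_sdiff hXT⟩
      rw [ncard_sdiff hXT (hTfin.subset hXT), hT, hXd]
      omega
    · exact ⟨X, ⟨subset_sdiff_singleton hXT heX, hXd⟩, rfl⟩
  rw [himage, ((injOn_complementPair hTK he).mono fun X hX ↦ hX.1).ncard_image,
    ncard_powerset_ncard hTfin.sdiff, ncard_sdiff_singleton_of_mem he, hT]

theorem exists_deltaPairs_eq_choose (hT : T.ncard = 2 * d) (hd : 0 < d) (hTK : Disjoint T K)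
    (hbase : ∀ X ⊆ T, X.ncard = d → M.IsBase (X ∪ K)) :
    ∃ B₁ B₂, M.IsBase B₁ ∧ M.IsBase B₂ ∧ M.deltaPairs B₁ B₂ = (2 * d - 1).choose d := by
  have hTfin : T.Finite := finite_of_ncard_pos (by omega)
  have hsdiff : ∀ X ⊆ T, X.ncard = d → (T \ X).ncard = d := fun X hX hXd ↦ by
    rw [ncard_sdiff hX (hTfin.subset hX), hT, hXd]
    omega
  obtain ⟨B, hBT, hBd⟩ := exists_subset_card_eq (show d ≤ T.ncard by omega)
  have hB := hbase B hBT hBd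
  have hiff : ∀ X ⊆ T, M.IsBase (X ∪ K) ↔ X.ncard = d := fun X hX ↦ by
    refine ⟨fun hXK ↦ ?_, hbase X hX⟩
    have h := encard_eq_encard_of_isBase_union hXK hB (hTK.mono_left hX) (hTK.mono_left hBT)
    rw [← (hTfin.subset hX).cast_ncard_eq, ← (hTfin.subset hBT).cast_ncard_eq, hBd] at h
    exact_mod_cast h
  refine ⟨B ∪ K, (T \ B) ∪ K, hB, hbase _ sdiff_subset (hsdiff B hBT hBd), ?_⟩
  rw [deltaPairs_union_sdiff_union hTK hBT, ← ncard_image_complementPair hT hd hTK]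
  congr 2
  ext X
  refine and_congr_right fun hX ↦ ?_
  rw [hiff X hX, hiff _ sdiff_subset]
  exact ⟨And.left, fun hXd ↦ ⟨hXd, hsdiff X hX hXd⟩⟩

end Matroid

open Matroid

theorem minor_uniform_general {α : Type*} (M : Matroid α) (d : ℕ) (hd : 2 ≤ d)
    (hminor : ∃ (A C : Set α) (N : Matroid α), A ⊆ M.E ∧ C ⊆ M.E ∧ Disjoint A C ∧
      N = (M.restrict (M.E \ A)).con C ∧
      N.E.ncard = 2 * d ∧ (∀ B, N.IsBase B ↔ B ⊆ N.E ∧ B.ncard = d)) :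
    ∃ B₁ B₂, M.IsBase B₁ ∧ M.IsBase B₂ ∧ M.deltaPairs B₁ B₂ = (2 * d - 1).choose d := by
  obtain ⟨A, C, N, -, -, hAC, rfl, hNcard, hNbase⟩ := hminor
  have hminor : M ＼ A ／ C ≤m M := ⟨C, A, (contract_delete_comm M hAC.symm).symm⟩
  obtain ⟨K, hNK, hK⟩ := hminor.exists_forall_isBase_union
  exact exists_deltaPairs_eq_choose hNcard (by omega) hNK
    fun X hX hXd ↦ hK X ((hNbase X).2 ⟨hX, hXd⟩)

/-- If `M` has a minor isomorphic to `U_{d,2d}` for some `d ≥ 2`, then some pair of bases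
`B₁, B₂` of `M` satisfies `Δ(B₁,B₂) = C(2d-1, d)`. -/
theorem minor_uniform {α : Type*} (M : Matroid α) (hfin : M.E.Finite) (d : ℕ) (hd : 2 ≤ d)
    (hminor : ∃ (A C : Set α) (N : Matroid α), A ⊆ M.E ∧ C ⊆ M.E ∧ Disjoint A C ∧
      N = (M.restrict (M.E \ A)).con C ∧
      N.E.ncard = 2 * d ∧ (∀ B, N.IsBase B ↔ B ⊆ N.E ∧ B.ncard = d)) :
    ∃ B₁ B₂, M.IsBase B₁ ∧ M.IsBase B₂ ∧ M.deltaPairs B₁ B₂ = (2 * d - 1).choose d :=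
  minor_uniform_general M d hd hminor
end

section
/- Let M be a rank 2 matroid without loops or coloops on a ground set E with |E| ≥ 5 containing two disjoint bases. Then there exist three elements a, b ∈ E and three elements c₁, c₂, c₃ ∈ E \ {a,b} such that all six pairs {a, cᵢ} and {b, cᵢ} (i = 1,2,3) are bases of M. -/
/-!
In a loopless matroid of rank two, two distinct elements form a base exactly when they lie in
different parallel classes `M.closure {x}`, so the basis graph is complete multipartite, and a
base cannot lie inside one class. If some class `P` has two elements and at least three elements
lie outside it, take `a, b ∈ P`. If every class is a singleton, any two elements will do.
Otherwise some class `P` has at most two elements outside it, hence at least three inside; every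
base meets `E \ P`, so without coloops `E \ P` contains two elements `a, b`, and `P` supplies
the common neighbours.
-/

open Set

namespace Matroid

variable {α : Type*} {M : Matroid α} {A B C : Set α} {a c x : α} {k : ℕ}

lemma eRank_eq_of_forall_isBase_ncard_eq (hk : k ≠ 0) (h : ∀ B, M.IsBase B → B.ncard = k) :
    M.eRank = k := by
  obtain ⟨B, hB⟩ := M.exists_isBase
  rw [← hB.encard_eq_eRank, ← (finite_of_ncard_ne_zero (h B hB ▸ hk)).cast_ncard_eq, h B hB]

lemma isBase_pair_of_indep (hM : M.eRank = 2) (hac : a ≠ c) (h : M.Indep {a, c}) :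
    M.IsBase {a, c} :=
  h.isBase_of_eRk_ge (toFinite _) (by rw [h.eRk_eq_encard, encard_pair hac, hM])

lemma isBase_pair_of_mem_closure_of_notMem [M.Loopless] (hM : M.eRank = 2)
    (ha : a ∈ M.closure {x}) (hc : c ∈ M.E \ M.closure {x}) : M.IsBase {a, c} := by
  have ha' : M.IsNonloop a := isNonloop_of_loopless (M.closure_subset_ground _ ha)
  have hac : a ≠ c := by rintro rfl; exact hc.2 ha
  rw [← ha'.closure_eq_of_mem_closure ha] at hc
  have hca : M.Indep {c, a} := (ha'.indep.insert_indep_iff_of_notMem hac.symm).2 hc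
  exact isBase_pair_of_indep hM hac (pair_comm a c ▸ hca)

lemma isBase_pair_of_closure_subsingleton [M.Loopless] (hM : M.eRank = 2)
    (hsimple : ∀ x, (M.closure {x}).Subsingleton) (hac : a ≠ c) (ha : a ∈ M.E) (hc : c ∈ M.E) :
    M.IsBase {a, c} :=
  isBase_pair_of_mem_closure_of_notMem hM (M.mem_closure_self a)
    ⟨hc, fun hca ↦ hac (hsimple a (M.mem_closure_self a) hca)⟩

lemma IsBase.not_subset_closure_singleton (hM : M.eRank = 2) (hB : M.IsBase B) (x : α) :
    ¬ B ⊆ M.closure {x} := fun hBx ↦ by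
  have : B.encard ≤ 1 := calc
    B.encard ≤ M.eRk (M.closure {x}) := hB.indep.encard_le_eRk_of_subset hBx
    _ = M.eRk {x} := M.eRk_closure_eq {x}
    _ ≤ 1 := M.eRk_singleton_le x
  rw [hB.encard_eq_eRank, hM] at this
  norm_num at this

lemma nontrivial_ground_diff_closure_singleton (hM : M.eRank = 2)
    (hco : ∀ e, ¬ M.IsColoop e) (x : α) : (M.E \ M.closure {x}).Nontrivial := by
  obtain ⟨B, hB⟩ := M.exists_isBase
  obtain ⟨u, huB, hux⟩ := not_subset.1 (hB.not_subset_closure_singleton hM x)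
  obtain ⟨B', hB', huB'⟩ : ∃ B', M.IsBase B' ∧ u ∉ B' := by
    simpa [isColoop_iff_forall_mem_isBase] using hco u
  obtain ⟨v, hvB', hvx⟩ := not_subset.1 (hB'.not_subset_closure_singleton hM x)
  exact ⟨u, ⟨hB.subset_ground huB, hux⟩, v, ⟨hB'.subset_ground hvB', hvx⟩,
    by rintro rfl; exact huB' hvB'⟩

lemma exists_K23_of_forall_isBase (hA : A.Nontrivial) (hC : 2 < C.ncard) (hAC : Disjoint A C)
    (hbase : ∀ a ∈ A, ∀ c ∈ C, M.IsBase {a, c}) :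
    ∃ a b c₁ c₂ c₃ : α, a ∈ M.E ∧ b ∈ M.E ∧ a ≠ b ∧
      c₁ ∈ M.E \ {a, b} ∧ c₂ ∈ M.E \ {a, b} ∧ c₃ ∈ M.E \ {a, b} ∧
      c₁ ≠ c₂ ∧ c₁ ≠ c₃ ∧ c₂ ≠ c₃ ∧
      M.IsBase {a, c₁} ∧ M.IsBase {a, c₂} ∧ M.IsBase {a, c₃} ∧
      M.IsBase {b, c₁} ∧ M.IsBase {b, c₂} ∧ M.IsBase {b, c₃} := by
  obtain ⟨a, ha, b, hb, hab⟩ := hA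
  obtain ⟨c₁, c₂, c₃, h₁, h₂, h₃, h₁₂, h₁₃, h₂₃⟩ :=
    (two_lt_ncard_iff (finite_of_ncard_pos (by omega))).1 hC
  have hmem : ∀ c ∈ C, c ∈ M.E \ {a, b} := fun c hc ↦
    ⟨(hbase a ha c hc).subset_ground (by simp), by
      rintro (rfl | rfl) <;> exact hAC.notMem_of_mem_left ‹_› hc⟩
  exact ⟨a, b, c₁, c₂, c₃, (hbase a ha c₁ h₁).subset_ground (by simp),
    (hbase b hb c₁ h₁).subset_ground (by simp), hab, hmem c₁ h₁, hmem c₂ h₂, hmem c₃ h₃,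
    h₁₂, h₁₃, h₂₃, hbase a ha c₁ h₁, hbase a ha c₂ h₂, hbase a ha c₃ h₃,
    hbase b hb c₁ h₁, hbase b hb c₂ h₂, hbase b hb c₃ h₃⟩

end Matroid

open Matroid

theorem rank_two_K23_general {α : Type*} (M : Matroid α)
    (hcard : 5 ≤ M.E.ncard)
    (hrank : ∀ B, M.IsBase B → B.ncard = 2)
    (hloops : ∀ e ∈ M.E, ∃ B, M.IsBase B ∧ e ∈ B)
    (hcoloops : ∀ e ∈ M.E, ∃ B, M.IsBase B ∧ e ∉ B) :
    ∃ a b c₁ c₂ c₃ : α, a ∈ M.E ∧ b ∈ M.E ∧ a ≠ b ∧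
      c₁ ∈ M.E \ {a, b} ∧ c₂ ∈ M.E \ {a, b} ∧ c₃ ∈ M.E \ {a, b} ∧
      c₁ ≠ c₂ ∧ c₁ ≠ c₃ ∧ c₂ ≠ c₃ ∧
      M.IsBase {a, c₁} ∧ M.IsBase {a, c₂} ∧ M.IsBase {a, c₃} ∧
      M.IsBase {b, c₁} ∧ M.IsBase {b, c₂} ∧ M.IsBase {b, c₃} := by
  have hM : M.eRank = 2 := eRank_eq_of_forall_isBase_ncard_eq two_ne_zero hrank
  have : M.Loopless := loopless_iff_forall_isNonloop.2 fun e he ↦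
    have ⟨B, hB, heB⟩ := hloops e he
    hB.indep.isNonloop_of_mem heB
  have hco : ∀ e, ¬ M.IsColoop e := fun e he ↦
    have ⟨B, hB, heB⟩ := hcoloops e he.mem_ground
    heB (he.mem_of_isBase hB)
  have hE : M.E.Finite := finite_of_ncard_pos (by omega)
  by_cases hpar : ∃ x, (M.closure {x}).Nontrivial
  · obtain ⟨x, hx⟩ := hpar
    rcases lt_or_ge 2 (M.E \ M.closure {x}).ncard with hout | hout
    · exact exists_K23_of_forall_isBase hx hout disjoint_sdiff_right
        fun a ha c hc ↦ isBase_pair_of_mem_closure_of_notMem hM ha hc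
    · have hin : 2 < (M.closure {x}).ncard := by
        have := ncard_sdiff_add_ncard_of_subset (M.closure_subset_ground {x}) hE
        omega
      exact exists_K23_of_forall_isBase (nontrivial_ground_diff_closure_singleton hM hco x) hin
        disjoint_sdiff_left fun c hc a ha ↦
          pair_comm a c ▸ isBase_pair_of_mem_closure_of_notMem hM ha hc
  · simp only [not_exists, not_nontrivial_iff] at hpar
    obtain ⟨a, b, ha, hb, hab⟩ := (one_lt_ncard_iff hE).1 (by omega)
    have hout : 2 < (M.E \ {a, b}).ncard := by
      rw [ncard_sdiff (pair_subset ha hb), ncard_pair hab]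
      omega
    exact exists_K23_of_forall_isBase (nontrivial_pair hab) hout disjoint_sdiff_right
      fun e he c hc ↦ isBase_pair_of_closure_subsingleton hM hpar (ne_of_mem_of_not_mem he hc.2)
        (pair_subset ha hb he) hc.1

/-- A rank-2 matroid without loops or coloops on at least 5 elements containing two disjoint
bases has a `K_{2,3}` in its "basis graph on the ground set". -/
theorem rank_two_K23 {α : Type*} (M : Matroid α) (hfin : M.E.Finite)
    (hcard : 5 ≤ M.E.ncard)
    (hrank : ∀ B, M.IsBase B → B.ncard = 2)
    (hloops : ∀ e ∈ M.E, ∃ B, M.IsBase B ∧ e ∈ B)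
    (hcoloops : ∀ e ∈ M.E, ∃ B, M.IsBase B ∧ e ∉ B)
    (hdisj : ∃ B₁ B₂, M.IsBase B₁ ∧ M.IsBase B₂ ∧ Disjoint B₁ B₂) :
    ∃ a b c₁ c₂ c₃ : α, a ∈ M.E ∧ b ∈ M.E ∧ a ≠ b ∧
      c₁ ∈ M.E \ {a, b} ∧ c₂ ∈ M.E \ {a, b} ∧ c₃ ∈ M.E \ {a, b} ∧
      c₁ ≠ c₂ ∧ c₁ ≠ c₃ ∧ c₂ ≠ c₃ ∧
      M.IsBase {a, c₁} ∧ M.IsBase {a, c₂} ∧ M.IsBase {a, c₃} ∧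
      M.IsBase {b, c₁} ∧ M.IsBase {b, c₂} ∧ M.IsBase {b, c₃} :=
  rank_two_K23_general M hcard hrank hloops hcoloops
end

section
/- Let M be a matroid in which every two bases B₁, B₂ satisfy |B₁ \ B₂| ≤ 2, and suppose M is binary (equivalently, Δ(B₁,B₂) ≠ 3 for all pairs of bases). Then M is strongly base orderable: for any two bases B₁ and B₂ there is a bijection π : B₁ → B₂ such that (B₁ \ C) ∪ π(C) is a basis for all C ⊆ B₁. -/
/-!
If `π` fixes `B₁ ∩ B₂` pointwise and maps `B₁ \ B₂` onto `B₂ \ B₁`, then `(B₁ \ C) ∪ π '' C`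
only depends on `C \ B₂`, and it is `B₁` or `B₂` when `C \ B₂` is empty or all of `B₁ \ B₂`.
So at distance at most one any such `π` works, while for `B₁ \ B₂ = {e₁, e₂}` and
`B₂ \ B₁ = {f₁, f₂}` it suffices to pair them so that `insert fᵢ (B₁ \ {eᵢ})` are bases.
Basis exchange in `M` gives every `eᵢ` some partner `fⱼ`, basis exchange in the dual gives every
`fⱼ` some partner `eᵢ`, and a 2 × 2 bipartite graph without isolated vertices has a perfect
matching.
-/

namespace Set

theorem sdiff_union_image_eq_of_eqOn {α : Type*} {π : α → α} {B₁ B₂ C : Set α}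
    (hfix : EqOn π id (B₁ ∩ B₂)) (hC : C ⊆ B₁) :
    (B₁ \ C) ∪ π '' C = (B₁ \ (C \ B₂)) ∪ π '' (C \ B₂) := by
  have hCB₂ : π '' (C ∩ B₂) = C ∩ B₂ :=
    (hfix.mono (inter_subset_inter_left _ hC)).image_eq_self
  conv_lhs => rw [← inter_union_sdiff C B₂, image_union, hCB₂, ← union_assoc]
  congr 1
  ext x
  have := @hC x
  simp only [mem_union, mem_sdiff, mem_inter_iff]
  tauto

end Set

namespace Matroid

open Set Equiv

variable {α : Type*} {M : Matroid α} {B₁ B₂ : Set α} {e f : α}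

theorem IsBase.rev_exchange (hB₁ : M.IsBase B₁) (hB₂ : M.IsBase B₂) (hf : f ∈ B₂ \ B₁) :
    ∃ e ∈ B₁ \ B₂, M.IsBase (insert f (B₁ \ {e})) := by
  have hfE : f ∈ M.E := hB₂.subset_ground hf.1
  obtain ⟨e, ⟨heE, heB₂⟩, hB⟩ := hB₁.compl_isBase_dual.exchange hB₂.compl_isBase_dual
    (e := f) ⟨⟨hfE, hf.2⟩, fun h ↦ h.2 hf.1⟩
  have heB₁ : e ∈ B₁ := by simpa [heE.1] using heB₂
  refine ⟨e, ⟨heB₁, heE.2⟩, ?_⟩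
  convert hB.compl_isBase_of_dual using 1
  ext x
  have := hB₁.subset_ground (a := x)
  simp only [mem_insert_iff, mem_sdiff, mem_singleton_iff]
  grind

def IsExchangeBijection (M : Matroid α) (B₁ B₂ : Set α) (π : α → α) : Prop :=
  BijOn π B₁ B₂ ∧ ∀ C ⊆ B₁, M.IsBase ((B₁ \ C) ∪ π '' C)

theorem isExchangeBijection_id {B : Set α} (hB : M.IsBase B) : M.IsExchangeBijection B B id :=
  ⟨bijOn_id B, fun C hC ↦ by rwa [image_id, sdiff_union_of_subset hC]⟩

theorem isExchangeBijection_of_ssubset_sdiff {π : α → α} (hB₁ : M.IsBase B₁)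
    (hB₂ : M.IsBase B₂) (hinj : InjOn π B₁) (hfix : EqOn π id (B₁ ∩ B₂))
    (himg : π '' (B₁ \ B₂) = B₂ \ B₁)
    (hbase : ∀ C ⊂ B₁ \ B₂, C.Nonempty → M.IsBase ((B₁ \ C) ∪ π '' C)) :
    M.IsExchangeBijection B₁ B₂ π := by
  have hfull : (B₁ \ (B₁ \ B₂)) ∪ π '' (B₁ \ B₂) = B₂ := by
    rw [himg, sdiff_sdiff_right_self, inter_comm, inter_union_sdiff]
  have hsdiff : ∀ C ⊆ B₁ \ B₂, M.IsBase ((B₁ \ C) ∪ π '' C) := by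
    intro C hC
    obtain rfl | hne := C.eq_empty_or_nonempty
    · simpa using hB₁
    obtain rfl | hss := hC.eq_or_ssubset
    · rwa [hfull]
    · exact hbase C hss hne
  have himage : π '' B₁ = B₂ := by
    rw [← hfull, ← sdiff_union_image_eq_of_eqOn hfix subset_rfl, sdiff_self, empty_union]
  exact ⟨himage ▸ hinj.bijOn_image, fun C hC ↦
    sdiff_union_image_eq_of_eqOn hfix hC ▸ hsdiff _ (sdiff_subset_sdiff_left hC)⟩

theorem isExchangeBijection_swap [DecidableEq α] (hB₁ : M.IsBase B₁) (hB₂ : M.IsBase B₂)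
    (hd : B₁ \ B₂ = {e}) (hd' : B₂ \ B₁ = {f}) : M.IsExchangeBijection B₁ B₂ (swap e f) := by
  have he : e ∈ B₁ \ B₂ := hd ▸ rfl
  have hf : f ∈ B₂ \ B₁ := hd' ▸ rfl
  refine isExchangeBijection_of_ssubset_sdiff hB₁ hB₂ (swap e f).injective.injOn
    (fun x hx ↦ swap_apply_of_ne_of_ne (ne_of_mem_of_not_mem hx.2 he.2)
      (ne_of_mem_of_not_mem hx.1 hf.2))
    (by rw [hd, hd', image_singleton, swap_apply_left]) fun C hC hne ↦ ?_
  exact absurd (ssubset_singleton_iff.1 (hd ▸ hC)) hne.ne_empty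

theorem isExchangeBijection_swap_mul_swap [DecidableEq α] {e₁ e₂ f₁ f₂ : α}
    (hB₁ : M.IsBase B₁) (hB₂ : M.IsBase B₂) (he : e₁ ≠ e₂) (hf : f₁ ≠ f₂)
    (hd : B₁ \ B₂ = {e₁, e₂}) (hd' : B₂ \ B₁ = {f₁, f₂})
    (h₁ : M.IsBase (insert f₁ (B₁ \ {e₁}))) (h₂ : M.IsBase (insert f₂ (B₁ \ {e₂}))) :
    M.IsExchangeBijection B₁ B₂ (swap e₁ f₁ * swap e₂ f₂) := by
  have he₁ : e₁ ∈ B₁ \ B₂ := hd ▸ mem_insert _ _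
  have he₂ : e₂ ∈ B₁ \ B₂ := hd ▸ mem_insert_of_mem _ rfl
  have hf₁ : f₁ ∈ B₂ \ B₁ := hd' ▸ mem_insert _ _
  have hf₂ : f₂ ∈ B₂ \ B₁ := hd' ▸ mem_insert_of_mem _ rfl
  have hπ₁ : (swap e₁ f₁ * swap e₂ f₂) e₁ = f₁ := by
    simp [swap_apply_of_ne_of_ne he (ne_of_mem_of_not_mem he₁.1 hf₂.2)]
  have hπ₂ : (swap e₁ f₁ * swap e₂ f₂) e₂ = f₂ := by
    simp [swap_apply_of_ne_of_ne (ne_of_mem_of_not_mem hf₂.1 he₁.2) hf.symm]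
  refine isExchangeBijection_of_ssubset_sdiff hB₁ hB₂ (Equiv.injective _).injOn
    (fun x hx ↦ ?_) (by rw [hd, hd', image_pair, hπ₁, hπ₂]) fun C hC hne ↦ ?_
  · simp [swap_apply_of_ne_of_ne (ne_of_mem_of_not_mem hx.2 he₁.2)
      (ne_of_mem_of_not_mem hx.1 hf₁.2), swap_apply_of_ne_of_ne (ne_of_mem_of_not_mem hx.2 he₂.2)
      (ne_of_mem_of_not_mem hx.1 hf₂.2)]
  obtain rfl | rfl | rfl := hne.subset_pair_iff_eq.1 (hd ▸ hC.subset)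
  · rwa [image_singleton, hπ₁, union_singleton]
  · rwa [image_singleton, hπ₂, union_singleton]
  · exact absurd hd.symm hC.ne

theorem exists_isExchangeBijection_of_sdiff_eq_pair {e₁ e₂ f₁ f₂ : α}
    (hB₁ : M.IsBase B₁) (hB₂ : M.IsBase B₂) (he : e₁ ≠ e₂) (hf : f₁ ≠ f₂)
    (hd : B₁ \ B₂ = {e₁, e₂}) (hd' : B₂ \ B₁ = {f₁, f₂}) :
    ∃ π, M.IsExchangeBijection B₁ B₂ π := by
  classical
  have hfwd : ∀ e ∈ B₁ \ B₂, ∃ f ∈ B₂ \ B₁, M.IsBase (insert f (B₁ \ {e})) :=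
    fun e he ↦ hB₁.exchange hB₂ he
  have hbwd : ∀ f ∈ B₂ \ B₁, ∃ e ∈ B₁ \ B₂, M.IsBase (insert f (B₁ \ {e})) :=
    fun f hf ↦ hB₁.rev_exchange hB₂ hf
  simp only [hd, hd', mem_insert_iff, mem_singleton_iff, forall_eq_or_imp, forall_eq,
    exists_eq_or_imp, exists_eq_left] at hfwd hbwd
  obtain ⟨h₁, h₂⟩ | ⟨h₁, h₂⟩ : (M.IsBase (insert f₁ (B₁ \ {e₁})) ∧ M.IsBase (insert f₂ (B₁ \ {e₂})))
      ∨ (M.IsBase (insert f₂ (B₁ \ {e₁})) ∧ M.IsBase (insert f₁ (B₁ \ {e₂}))) := by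
    tauto
  · exact ⟨_, isExchangeBijection_swap_mul_swap hB₁ hB₂ he hf hd hd' h₁ h₂⟩
  · exact ⟨_, isExchangeBijection_swap_mul_swap hB₁ hB₂ he hf.symm hd
      (pair_comm f₁ f₂ ▸ hd') h₁ h₂⟩

end Matroid

open Set Matroid in
theorem strongly_base_orderable_general {α : Type*} (M : Matroid α) (hfin : M.E.Finite)
    (hdist : ∀ B₁ B₂, M.IsBase B₁ → M.IsBase B₂ → (B₁ \ B₂).ncard ≤ 2) :
    ∀ B₁ B₂, M.IsBase B₁ → M.IsBase B₂ → ∃ π : α → α, Set.BijOn π B₁ B₂ ∧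
      ∀ C ⊆ B₁, M.IsBase ((B₁ \ C) ∪ π '' C) := by
  intro B₁ B₂ hB₁ hB₂
  classical
  have hcomm := hB₁.ncard_sdiff_comm hB₂
  obtain h0 | h1 | h2 : (B₁ \ B₂).ncard = 0 ∨ (B₁ \ B₂).ncard = 1 ∨ (B₁ \ B₂).ncard = 2 := by
    have := hdist B₁ B₂ hB₁ hB₂
    omega
  · have hD : (B₁ \ B₂).Finite := hfin.subset (sdiff_subset.trans hB₁.subset_ground)
    obtain rfl := hB₁.eq_of_subset_isBase hB₂ (sdiff_eq_empty.1 ((ncard_eq_zero hD).1 h0))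
    exact ⟨id, isExchangeBijection_id hB₁⟩
  · obtain ⟨e, hd⟩ := ncard_eq_one.1 h1
    obtain ⟨f, hd'⟩ := ncard_eq_one.1 (hcomm ▸ h1)
    exact ⟨_, isExchangeBijection_swap hB₁ hB₂ hd hd'⟩
  · obtain ⟨e₁, e₂, he, hd⟩ := ncard_eq_two.1 h2
    obtain ⟨f₁, f₂, hf, hd'⟩ := ncard_eq_two.1 (hcomm ▸ h2)
    exact exists_isExchangeBijection_of_sdiff_eq_pair hB₁ hB₂ he hf hd hd'

/-- A binary matroid in which any two bases `B₁, B₂` satisfy `|B₁ \ B₂| ≤ 2` is strongly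
base orderable. -/
theorem strongly_base_orderable {α : Type*} (M : Matroid α) (hfin : M.E.Finite)
    (hdist : ∀ B₁ B₂, M.IsBase B₁ → M.IsBase B₂ → (B₁ \ B₂).ncard ≤ 2)
    (hbin : ∀ B₁ B₂, M.IsBase B₁ → M.IsBase B₂ → M.deltaPairs B₁ B₂ ≠ 3) :
    ∀ B₁ B₂, M.IsBase B₁ → M.IsBase B₂ → ∃ π : α → α, Set.BijOn π B₁ B₂ ∧
      ∀ C ⊆ B₁, M.IsBase ((B₁ \ C) ∪ π '' C) :=
  strongly_base_orderable_general M hfin hdist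
end
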